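/- arXiv:1706.06126 — 3 statements merged into one kernel-verified Lean document; each statement's English description precedes it below -/
import Mathlib

section
/- Let f be a twice continuously differentiable nonvanishing solution of f'' = q f on (-b,b) with f(0)=1. Then each even-indexed formal power φ_{2m}(x) = f(x) X̃^(2m)(x) is twice continuously differentiable and satisfies φ_{2m}'' - q φ_{2m} = 2m(2m-1) φ_{2m-2} on (-b,b). -/
noncomputable def Xseq (f : ℝ → ℂ) : ℕ → ℝ → ℂ
  | 0 => fun _ => 1
  | n + 1 => fun x => ((n : ℂ) + 1) *
      ∫ s in (0 : ℝ)..x, Xseq f n s * (if (n + 1) % 2 = 0 then (f s) ^ 2 else ((f s) ^ 2)⁻¹)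

noncomputable def Xtseq (f : ℝ → ℂ) : ℕ → ℝ → ℂ
  | 0 => fun _ => 1
  | n + 1 => fun x => ((n : ℂ) + 1) *
      ∫ s in (0 : ℝ)..x, Xtseq f n s * (if (n + 1) % 2 = 0 then ((f s) ^ 2)⁻¹ else (f s) ^ 2)

noncomputable def formalPower (f : ℝ → ℂ) (k : ℕ) (x : ℝ) : ℂ :=
  if k % 2 = 1 then f x * Xseq f k x else f x * Xtseq f k x

/-!
With `A = X̃^(2m)`, `B = X̃^(2m-1)`, `C = X̃^(2m-2)` the recursion gives `A' = 2m B / f²` and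
`B' = (2m-1) C f²`. Hence `(f A)' = f' A + 2m B / f`, and differentiating once more the two
terms `± 2m B f' / f²` cancel, leaving `(f A)'' = f'' A + 2m(2m-1) f C = q (f A) + 2m(2m-1) f C`.
-/

open Set Filter Topology

theorem hasDerivAt_integral_of_continuousOn {U : Set ℝ} (hU : IsOpen U) (hUc : U.OrdConnected)
    {a x : ℝ} (ha : a ∈ U) (hx : x ∈ U) {g : ℝ → ℂ} (hg : ContinuousOn g U) :
    HasDerivAt (fun y => ∫ s in a..y, g s) (g x) x :=
  intervalIntegral.integral_hasDerivAt_right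
    ((hg.mono (hUc.uIcc_subset ha hx)).intervalIntegrable)
    (hg.stronglyMeasurableAtFilter hU x hx) (hg.continuousAt (hU.mem_nhds hx))

theorem ContDiffOn.hasDerivAt_deriv_deriv {U : Set ℝ} (hU : IsOpen U) {f : ℝ → ℂ}
    (hf : ContDiffOn ℝ 2 f U) {x : ℝ} (hx : x ∈ U) :
    HasDerivAt f (deriv f x) x ∧ HasDerivAt (deriv f) (deriv (deriv f) x) x := by
  have hf' : ContDiffOn ℝ 1 (deriv f) U := hf.deriv_of_isOpen hU (by norm_num)
  exact ⟨((hf.differentiableOn (by norm_num)).differentiableAt (hU.mem_nhds hx)).hasDerivAt,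
    ((hf'.differentiableOn (by norm_num)).differentiableAt (hU.mem_nhds hx)).hasDerivAt⟩

theorem contDiffOn_two_of_hasDerivAt {U : Set ℝ} (hU : IsOpen U) {φ φ₁ ψ : ℝ → ℂ}
    (hφ : ∀ x ∈ U, HasDerivAt φ (φ₁ x) x) (hφ₁ : ∀ x ∈ U, HasDerivAt φ₁ (ψ x) x)
    (hψ : ContinuousOn ψ U) : ContDiffOn ℝ 2 φ U := by
  rw [show (2 : WithTop ℕ∞) = 1 + 1 by norm_num, contDiffOn_succ_iff_deriv_of_isOpen hU]
  refine ⟨fun x hx => (hφ x hx).differentiableAt.differentiableWithinAt, by simp, ?_⟩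
  refine ContDiffOn.congr ?_ fun x hx => (hφ x hx).deriv
  rw [show (1 : WithTop ℕ∞) = 0 + 1 by norm_num, contDiffOn_succ_iff_deriv_of_isOpen hU]
  refine ⟨fun x hx => (hφ₁ x hx).differentiableAt.differentiableWithinAt, by simp, ?_⟩
  exact contDiffOn_zero.mpr (hψ.congr fun x hx => (hφ₁ x hx).deriv)

theorem deriv_deriv_eq_of_hasDerivAt {U : Set ℝ} (hU : IsOpen U) {φ φ₁ : ℝ → ℂ}
    (hφ : ∀ x ∈ U, HasDerivAt φ (φ₁ x) x) {x : ℝ} (hx : x ∈ U) {a : ℂ}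
    (hφ₁ : HasDerivAt φ₁ a x) : deriv (deriv φ) x = a := by
  have hderiv : deriv φ =ᶠ[𝓝 x] φ₁ := by
    filter_upwards [hU.mem_nhds hx] with y hy
    exact (hφ y hy).deriv
  rw [hderiv.deriv_eq, hφ₁.deriv]

section FormalPowerCalculus

variable {f f' A B C : ℝ → ℂ} {c d : ℂ} {x : ℝ}

theorem hasDerivAt_mul_of_hasDerivAt_div_sq (hf : HasDerivAt f (f' x) x)
    (hA : HasDerivAt A (c * (B x / f x ^ 2)) x) (hfx : f x ≠ 0) :
    HasDerivAt (fun y => f y * A y) (f' x * A x + c * B x / f x) x :=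
  (hf.mul hA).congr_deriv (by field_simp)

theorem hasDerivAt_deriv_mul_add_div {f'' : ℂ} (hf : HasDerivAt f (f' x) x)
    (hf' : HasDerivAt f' f'' x)
    (hA : HasDerivAt A (c * (B x / f x ^ 2)) x) (hB : HasDerivAt B (d * (C x * f x ^ 2)) x)
    (hfx : f x ≠ 0) :
    HasDerivAt (fun y => f' y * A y + c * B y / f y) (f'' * A x + c * d * (f x * C x)) x :=
  ((hf'.mul hA).add ((hB.const_mul c).div hf hfx)).congr_deriv (by field_simp; ring)

end FormalPowerCalculus

section Xtseq

variable {U : Set ℝ} {f : ℝ → ℂ}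

theorem continuousOn_Xtseq_weight (hf : ContinuousOn f U) (hfU : ∀ x ∈ U, f x ≠ 0) (n : ℕ) :
    ContinuousOn (fun s => if (n + 1) % 2 = 0 then ((f s) ^ 2)⁻¹ else (f s) ^ 2) U := by
  by_cases hn : (n + 1) % 2 = 0
  · simp only [hn, ↓reduceIte]
    exact (hf.pow 2).inv₀ fun x hx => pow_ne_zero 2 (hfU x hx)
  · simp only [hn, ↓reduceIte]
    exact hf.pow 2

theorem hasDerivAt_Xtseq_succ_of_continuousOn (hU : IsOpen U) (hUc : U.OrdConnected)
    (h0 : (0 : ℝ) ∈ U) (hf : ContinuousOn f U) (hfU : ∀ x ∈ U, f x ≠ 0) {n : ℕ}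
    (hn : ContinuousOn (Xtseq f n) U) {x : ℝ} (hx : x ∈ U) :
    HasDerivAt (Xtseq f (n + 1)) (((n : ℂ) + 1) *
      (Xtseq f n x * if (n + 1) % 2 = 0 then ((f x) ^ 2)⁻¹ else (f x) ^ 2)) x :=
  (hasDerivAt_integral_of_continuousOn hU hUc h0 hx
    (hn.mul (continuousOn_Xtseq_weight hf hfU n))).const_mul _

theorem continuousOn_Xtseq (hU : IsOpen U) (hUc : U.OrdConnected) (h0 : (0 : ℝ) ∈ U)
    (hf : ContinuousOn f U) (hfU : ∀ x ∈ U, f x ≠ 0) (n : ℕ) :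
    ContinuousOn (Xtseq f n) U := by
  induction n with
  | zero => exact continuousOn_const
  | succ n ih => exact fun x hx =>
      (hasDerivAt_Xtseq_succ_of_continuousOn hU hUc h0 hf hfU ih hx).continuousAt.continuousWithinAt

theorem hasDerivAt_Xtseq_even (hU : IsOpen U) (hUc : U.OrdConnected) (h0 : (0 : ℝ) ∈ U)
    (hf : ContinuousOn f U) (hfU : ∀ x ∈ U, f x ≠ 0) (k : ℕ) {x : ℝ} (hx : x ∈ U) :
    HasDerivAt (Xtseq f (2 * k + 2))
      ((2 * k + 2) * (Xtseq f (2 * k + 1) x / f x ^ 2)) x := by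
  have h := hasDerivAt_Xtseq_succ_of_continuousOn hU hUc h0 hf hfU
    (continuousOn_Xtseq hU hUc h0 hf hfU (2 * k + 1)) hx
  rw [if_pos (by omega)] at h
  convert h using 1
  push_cast
  ring

theorem hasDerivAt_Xtseq_odd (hU : IsOpen U) (hUc : U.OrdConnected) (h0 : (0 : ℝ) ∈ U)
    (hf : ContinuousOn f U) (hfU : ∀ x ∈ U, f x ≠ 0) (k : ℕ) {x : ℝ} (hx : x ∈ U) :
    HasDerivAt (Xtseq f (2 * k + 1)) ((2 * k + 1) * (Xtseq f (2 * k) x * f x ^ 2)) x := by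
  have h := hasDerivAt_Xtseq_succ_of_continuousOn hU hUc h0 hf hfU
    (continuousOn_Xtseq hU hUc h0 hf hfU (2 * k)) hx
  rw [if_neg (by omega)] at h
  convert h using 1
  push_cast
  ring

end Xtseq

theorem formalPower_two_mul (f : ℝ → ℂ) (m : ℕ) (x : ℝ) :
    formalPower f (2 * m) x = f x * Xtseq f (2 * m) x :=
  if_neg (by omega)

theorem formalPower_even_ode_general (b : ℝ) (hb : 0 < b) (q f : ℝ → ℂ)
    (hq : ContinuousOn q (Set.Ioo (-b) b))
    (hf : ContDiffOn ℝ 2 f (Set.Ioo (-b) b))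
    (hfnv : ∀ x ∈ Set.Ioo (-b) b, f x ≠ 0)
    (hfeq : ∀ x ∈ Set.Ioo (-b) b, deriv (deriv f) x = q x * f x)
    (m : ℕ) (hm : 1 ≤ m) :
    ContDiffOn ℝ 2 (fun x => formalPower f (2 * m) x) (Set.Ioo (-b) b) ∧
    ∀ x ∈ Set.Ioo (-b) b,
      deriv (deriv (fun y => formalPower f (2 * m) y)) x - q x * formalPower f (2 * m) x
        = (2 * m : ℂ) * (2 * m - 1 : ℂ) * formalPower f (2 * m - 2) x := by
  obtain ⟨k, rfl⟩ : ∃ k, m = k + 1 := ⟨m - 1, by omega⟩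
  have hU : IsOpen (Ioo (-b) b) := isOpen_Ioo
  have h0 : (0 : ℝ) ∈ Ioo (-b) b := ⟨by linarith, hb⟩
  have hA {x : ℝ} (hx : x ∈ Ioo (-b) b) :=
    hasDerivAt_Xtseq_even hU ordConnected_Ioo h0 hf.continuousOn hfnv k hx
  have hB {x : ℝ} (hx : x ∈ Ioo (-b) b) :=
    hasDerivAt_Xtseq_odd hU ordConnected_Ioo h0 hf.continuousOn hfnv k hx
  have hXt := continuousOn_Xtseq hU ordConnected_Ioo h0 hf.continuousOn hfnv
  have hφ (x : ℝ) (hx : x ∈ Ioo (-b) b) := hasDerivAt_mul_of_hasDerivAt_div_sq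
    (hf.hasDerivAt_deriv_deriv hU hx).1 (hA hx) (hfnv x hx)
  have hφ₁ (x : ℝ) (hx : x ∈ Ioo (-b) b) : HasDerivAt
      (fun y => deriv f y * Xtseq f (2 * k + 2) y + (2 * k + 2) * Xtseq f (2 * k + 1) y / f y)
      (q x * f x * Xtseq f (2 * k + 2) x + (2 * k + 2) * (2 * k + 1) * (f x * Xtseq f (2 * k) x))
      x := by
    obtain ⟨hf₁, hf₂⟩ := hf.hasDerivAt_deriv_deriv hU hx
    rw [hfeq x hx] at hf₂
    exact hasDerivAt_deriv_mul_add_div hf₁ hf₂ (hA hx) (hB hx) (hfnv x hx)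
  have hψ : ContinuousOn (fun x => q x * f x * Xtseq f (2 * k + 2) x +
      (2 * k + 2) * (2 * k + 1) * (f x * Xtseq f (2 * k) x)) (Ioo (-b) b) :=
    ((hq.mul hf.continuousOn).mul (hXt _)).add
      (continuousOn_const.mul (hf.continuousOn.mul (hXt _)))
  rw [show 2 * (k + 1) - 2 = 2 * k by omega]
  simp only [formalPower_two_mul]
  rw [show 2 * (k + 1) = 2 * k + 2 by ring]
  refine ⟨contDiffOn_two_of_hasDerivAt hU hφ hφ₁ hψ, fun x hx => ?_⟩
  rw [deriv_deriv_eq_of_hasDerivAt hU hφ hx (hφ₁ x hx)]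
  push_cast
  ring

theorem formalPower_even_ode (b : ℝ) (hb : 0 < b) (q f : ℝ → ℂ)
    (hq : ContinuousOn q (Set.Ioo (-b) b))
    (hf : ContDiffOn ℝ 2 f (Set.Ioo (-b) b))
    (hf0 : f 0 = 1)
    (hfnv : ∀ x ∈ Set.Ioo (-b) b, f x ≠ 0)
    (hfeq : ∀ x ∈ Set.Ioo (-b) b, deriv (deriv f) x = q x * f x)
    (m : ℕ) (hm : 1 ≤ m) :
    ContDiffOn ℝ 2 (fun x => formalPower f (2 * m) x) (Set.Ioo (-b) b) ∧
    ∀ x ∈ Set.Ioo (-b) b,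
      deriv (deriv (fun y => formalPower f (2 * m) y)) x - q x * formalPower f (2 * m) x
        = (2 * m : ℂ) * (2 * m - 1 : ℂ) * formalPower f (2 * m - 2) x :=
  formalPower_even_ode_general b hb q f hq hf hfnv hfeq m hm
end

section
/- Under the same setup, each odd-indexed formal power φ_{2m+1}(x) = f(x) X^(2m+1)(x) satisfies φ_{2m+1}'' - q φ_{2m+1} = (2m+1)(2m) φ_{2m-1} on (-b,b), and φ_1'' - q φ_1 = 0. -/
/-!
If `X' = Y / f ^ 2`, then `(f X)' = f' X + Y / f`, and in `(f X)'' = f'' X + f' X' + (Y / f)'` the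
terms in `f'` cancel, leaving `(f X)'' - q f X = Y' / f` when `f'' = q f`. For `φ_{2m+1}` take
`Y = (2m+1) X^(2m)`, whose derivative `(2m+1)(2m) X^(2m-1) f ^ 2` yields `(2m+1)(2m) φ_{2m-1}`;
for `φ_1` take `Y = 1`.
-/

open Set Filter Topology

section SecondDerivative

variable {𝕜 𝕜' : Type*} [NontriviallyNormedField 𝕜] [NontriviallyNormedField 𝕜']
  [NormedAlgebra 𝕜 𝕜'] {f f' X Y : 𝕜 → 𝕜'} {f'' Y' : 𝕜'} {x : 𝕜}

theorem hasDerivAt_deriv_mul_of_hasDerivAt_div_sq (hf : ∀ᶠ y in 𝓝 x, HasDerivAt f (f' y) y)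
    (hf' : HasDerivAt f' f'' x) (hfx : f x ≠ 0)
    (hX : ∀ᶠ y in 𝓝 x, HasDerivAt X (Y y / f y ^ 2) y) (hY : HasDerivAt Y Y' x) :
    HasDerivAt (deriv fun y => f y * X y) (f'' * X x + Y' / f x) x := by
  have hf_ne : ∀ᶠ y in 𝓝 x, f y ≠ 0 := hf.self_of_nhds.continuousAt.eventually_ne hfx
  have hderiv : deriv (fun y => f y * X y) =ᶠ[𝓝 x] fun y => f' y * X y + Y y / f y := by
    filter_upwards [hf, hX, hf_ne] with y hfy hXy hfy0
    rw [(hfy.fun_mul hXy).deriv]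
    field_simp
  refine HasDerivAt.congr_of_eventuallyEq ?_ hderiv
  convert (hf'.fun_mul hX.self_of_nhds).fun_add (hY.fun_div hf.self_of_nhds hfx) using 1
  field_simp
  ring

theorem deriv_deriv_mul_sub_mul_eq_div {q : 𝕜 → 𝕜'} {U : Set 𝕜} (hU : IsOpen U)
    (hf : ContDiffOn 𝕜 2 f U) (hfeq : ∀ y ∈ U, deriv (deriv f) y = q y * f y) (hx : x ∈ U)
    (hfx : f x ≠ 0) (hX : ∀ᶠ y in 𝓝 x, HasDerivAt X (Y y / f y ^ 2) y)
    (hY : HasDerivAt Y Y' x) :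
    deriv (deriv fun y => f y * X y) x - q x * (f x * X x) = Y' / f x := by
  have hf' : ∀ᶠ y in 𝓝 x, HasDerivAt f (deriv f y) y :=
    eventually_of_mem (hU.mem_nhds hx) fun y hy =>
      ((hf.differentiableOn (by simp)).differentiableAt (hU.mem_nhds hy)).hasDerivAt
  have hf'' : HasDerivAt (deriv f) (q x * f x) x := by
    rw [← hfeq x hx]
    have hf1 : ContDiffOn 𝕜 1 (deriv f) U := hf.deriv_of_isOpen hU (by norm_num)
    exact ((hf1.differentiableOn (by simp)).differentiableAt (hU.mem_nhds hx)).hasDerivAt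
  rw [(hasDerivAt_deriv_mul_of_hasDerivAt_div_sq hf' hf'' hfx hX hY).deriv]
  ring

end SecondDerivative

theorem ContinuousOn.hasDerivAt_integral_of_isOpen {E : Type*} [NormedAddCommGroup E]
    [NormedSpace ℝ E] [CompleteSpace E] {g : ℝ → E} {s : Set ℝ} (hg : ContinuousOn g s)
    (hs : IsOpen s) (hs' : s.OrdConnected) {a x : ℝ} (ha : a ∈ s) (hx : x ∈ s) :
    HasDerivAt (fun t => ∫ u in a..t, g u) (g x) x :=
  intervalIntegral.integral_hasDerivAt_right
    ((hg.mono (hs'.uIcc_subset ha hx)).intervalIntegrable)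
    (hg.stronglyMeasurableAtFilter hs x hx) (hg.continuousAt (hs.mem_nhds hx))

section Xseq

variable {f : ℝ → ℂ} {s : Set ℝ}

theorem continuousOn_Xseq_weight (hfc : ContinuousOn f s) (hfnv : ∀ x ∈ s, f x ≠ 0) (n : ℕ) :
    ContinuousOn (fun x => if (n + 1) % 2 = 0 then f x ^ 2 else (f x ^ 2)⁻¹) s := by
  split_ifs
  · exact hfc.pow 2
  · exact (hfc.pow 2).inv₀ fun x hx => pow_ne_zero 2 (hfnv x hx)

theorem continuousOn_Xseq (hs : IsOpen s) (hs' : s.OrdConnected) (hs0 : 0 ∈ s)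
    (hfc : ContinuousOn f s) (hfnv : ∀ x ∈ s, f x ≠ 0) (n : ℕ) :
    ContinuousOn (Xseq f n) s := by
  induction n with
  | zero => exact continuousOn_const
  | succ n ih =>
    intro x hx
    have hint := (ih.mul (continuousOn_Xseq_weight hfc hfnv n)).hasDerivAt_integral_of_isOpen
      hs hs' hs0 hx
    exact (continuousAt_const.mul hint.continuousAt).continuousWithinAt

theorem hasDerivAt_Xseq_succ (hs : IsOpen s) (hs' : s.OrdConnected) (hs0 : 0 ∈ s)
    (hfc : ContinuousOn f s) (hfnv : ∀ x ∈ s, f x ≠ 0) (n : ℕ) {x : ℝ} (hx : x ∈ s) :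
    HasDerivAt (Xseq f (n + 1))
      (((n : ℂ) + 1) * (Xseq f n x * if (n + 1) % 2 = 0 then f x ^ 2 else (f x ^ 2)⁻¹)) x :=
  (((continuousOn_Xseq hs hs' hs0 hfc hfnv n).mul
    (continuousOn_Xseq_weight hfc hfnv n)).hasDerivAt_integral_of_isOpen hs hs' hs0 hx).const_mul _

theorem hasDerivAt_Xseq_odd (hs : IsOpen s) (hs' : s.OrdConnected) (hs0 : 0 ∈ s)
    (hfc : ContinuousOn f s) (hfnv : ∀ x ∈ s, f x ≠ 0) (n : ℕ) {x : ℝ} (hx : x ∈ s) :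
    HasDerivAt (Xseq f (2 * n + 1)) ((2 * n + 1) * Xseq f (2 * n) x / f x ^ 2) x := by
  convert hasDerivAt_Xseq_succ hs hs' hs0 hfc hfnv (2 * n) hx using 1
  rw [if_neg (by omega)]
  push_cast
  ring

theorem hasDerivAt_Xseq_even (hs : IsOpen s) (hs' : s.OrdConnected) (hs0 : 0 ∈ s)
    (hfc : ContinuousOn f s) (hfnv : ∀ x ∈ s, f x ≠ 0) {n : ℕ} (hn : 1 ≤ n) {x : ℝ}
    (hx : x ∈ s) :
    HasDerivAt (Xseq f (2 * n)) (2 * n * Xseq f (2 * n - 1) x * f x ^ 2) x := by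
  obtain ⟨k, rfl⟩ : ∃ k, n = k + 1 := ⟨n - 1, by omega⟩
  rw [show 2 * (k + 1) = 2 * k + 1 + 1 by ring]
  convert hasDerivAt_Xseq_succ hs hs' hs0 hfc hfnv (2 * k + 1) hx using 1
  rw [if_pos (by omega), Nat.add_sub_cancel]
  push_cast
  ring

end Xseq

theorem formalPower_of_mod_two_eq_one {f : ℝ → ℂ} {k : ℕ} (hk : k % 2 = 1) :
    formalPower f k = fun x => f x * Xseq f k x := by
  ext x
  rw [formalPower, if_pos hk]

theorem formalPower_odd_ode_general (b : ℝ) (hb : 0 < b) (q f : ℝ → ℂ)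
    (hf : ContDiffOn ℝ 2 f (Set.Ioo (-b) b))
    (hfnv : ∀ x ∈ Set.Ioo (-b) b, f x ≠ 0)
    (hfeq : ∀ x ∈ Set.Ioo (-b) b, deriv (deriv f) x = q x * f x) :
    (∀ m : ℕ, 1 ≤ m → ∀ x ∈ Set.Ioo (-b) b,
      deriv (deriv (fun y => formalPower f (2 * m + 1) y)) x
          - q x * formalPower f (2 * m + 1) x
        = (2 * m + 1 : ℂ) * (2 * m : ℂ) * formalPower f (2 * m - 1) x) ∧
    (∀ x ∈ Set.Ioo (-b) b,
      deriv (deriv (fun y => formalPower f 1 y)) x - q x * formalPower f 1 x = 0) := by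
  have h0 : (0 : ℝ) ∈ Ioo (-b) b := ⟨by linarith, hb⟩
  have key : ∀ n, ∀ x ∈ Ioo (-b) b, ∀ {Y' : ℂ},
      HasDerivAt (fun y => (2 * n + 1) * Xseq f (2 * n) y) Y' x →
      deriv (deriv fun y => f y * Xseq f (2 * n + 1) y) x
        - q x * (f x * Xseq f (2 * n + 1) x) = Y' / f x := fun n x hx _ hY =>
    deriv_deriv_mul_sub_mul_eq_div isOpen_Ioo hf hfeq hx (hfnv x hx)
      (eventually_of_mem (isOpen_Ioo.mem_nhds hx) fun _ hy =>
        hasDerivAt_Xseq_odd isOpen_Ioo ordConnected_Ioo h0 hf.continuousOn hfnv n hy) hY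
  refine ⟨fun m hm x hx => ?_, fun x hx => ?_⟩
  · rw [formalPower_of_mod_two_eq_one (by omega), formalPower_of_mod_two_eq_one (by omega),
      key m x hx ((hasDerivAt_Xseq_even isOpen_Ioo ordConnected_Ioo h0 hf.continuousOn hfnv hm
        hx).const_mul _)]
    field_simp [hfnv x hx]
  · rw [formalPower_of_mod_two_eq_one (by omega)]
    simpa using key 0 x hx ((hasDerivAt_const x (1 : ℂ)).const_mul _)

theorem formalPower_odd_ode (b : ℝ) (hb : 0 < b) (q f : ℝ → ℂ)
    (hq : ContinuousOn q (Set.Ioo (-b) b))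
    (hf : ContDiffOn ℝ 2 f (Set.Ioo (-b) b))
    (hf0 : f 0 = 1)
    (hfnv : ∀ x ∈ Set.Ioo (-b) b, f x ≠ 0)
    (hfeq : ∀ x ∈ Set.Ioo (-b) b, deriv (deriv f) x = q x * f x) :
    (∀ m : ℕ, 1 ≤ m → ∀ x ∈ Set.Ioo (-b) b,
      deriv (deriv (fun y => formalPower f (2 * m + 1) y)) x
          - q x * formalPower f (2 * m + 1) x
        = (2 * m + 1 : ℂ) * (2 * m : ℂ) * formalPower f (2 * m - 1) x) ∧
    (∀ x ∈ Set.Ioo (-b) b,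
      deriv (deriv (fun y => formalPower f 1 y)) x - q x * formalPower f 1 x = 0) :=
  formalPower_odd_ode_general b hb q f hf hfnv hfeq
end

section
/- Let T be a linear operator on functions of x, acting for each fixed t, and suppose A(Tv) = T(v'') for all v ∈ C²[-b,b], where A = d²/dx² - q. Define u_n(x,t) = T[h_n(·,t)](x), where h_n is the n-th heat polynomial. Then u_n(x,t) = n! Σ_{k=0}^{⌊n/2⌋} t^k φ_{n-2k}(x)/(k!(n-2k)!) where φ_j = T[x^j], and u_n satisfies ∂²u_n/∂x² - q u_n = ∂u_n/∂t. -/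
noncomputable def heatPoly (n : ℕ) (x t : ℝ) : ℝ :=
  (Nat.factorial n : ℝ) * ∑ k ∈ Finset.range (n / 2 + 1),
    t ^ k * x ^ (n - 2 * k) / ((Nat.factorial k : ℝ) * (Nat.factorial (n - 2 * k) : ℝ))

open Finset

lemma T_sum_mono (T : (ℝ → ℝ) →ₗ[ℝ] (ℝ → ℝ)) (s : Finset ℕ) (a : ℕ → ℝ) (e : ℕ → ℕ) (x : ℝ) :
    T (fun y => ∑ k ∈ s, a k * y ^ e k) x = ∑ k ∈ s, a k * T (fun y => y ^ e k) x := by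
  have h : (fun y => ∑ k ∈ s, a k * y ^ e k) = ∑ k ∈ s, a k • (fun y : ℝ => y ^ e k) := by
    funext y; simp [Finset.sum_apply]
  rw [h, map_sum]
  simp [Finset.sum_apply]

lemma heat_hd1 (n : ℕ) (t y : ℝ) :
    HasDerivAt (fun y => heatPoly n y t)
      ((Nat.factorial n : ℝ) * ∑ k ∈ range (n / 2 + 1),
        t ^ k * ((n - 2 * k : ℕ) : ℝ) * y ^ (n - 2 * k - 1)
          / ((Nat.factorial k : ℝ) * (Nat.factorial (n - 2 * k) : ℝ))) y := by
  unfold heatPoly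
  refine HasDerivAt.const_mul _ (HasDerivAt.fun_sum fun k _ => ?_)
  have h := (((hasDerivAt_pow (n - 2 * k) y).const_mul (t ^ k)).div_const
    ((Nat.factorial k : ℝ) * (Nat.factorial (n - 2 * k) : ℝ)))
  exact h.congr_deriv (by ring)

lemma heat_hd2 (n : ℕ) (t y : ℝ) :
    HasDerivAt (fun y => (Nat.factorial n : ℝ) * ∑ k ∈ range (n / 2 + 1),
        t ^ k * ((n - 2 * k : ℕ) : ℝ) * y ^ (n - 2 * k - 1)
          / ((Nat.factorial k : ℝ) * (Nat.factorial (n - 2 * k) : ℝ)))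
      ((Nat.factorial n : ℝ) * ∑ k ∈ range (n / 2 + 1),
        t ^ k * ((n - 2 * k : ℕ) : ℝ) * (((n - 2 * k - 1 : ℕ) : ℝ) * y ^ (n - 2 * k - 1 - 1))
          / ((Nat.factorial k : ℝ) * (Nat.factorial (n - 2 * k) : ℝ))) y := by
  refine HasDerivAt.const_mul _ (HasDerivAt.fun_sum fun k _ => ?_)
  have h := (((hasDerivAt_pow (n - 2 * k - 1) y).const_mul (t ^ k * ((n - 2 * k : ℕ) : ℝ))).div_const
    ((Nat.factorial k : ℝ) * (Nat.factorial (n - 2 * k) : ℝ)))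
  convert h using 1

lemma heat_dd (n : ℕ) (t : ℝ) :
    deriv (deriv (fun y => heatPoly n y t)) = fun y =>
      ∑ k ∈ range (n / 2 + 1),
        (Nat.factorial n : ℝ) * (k : ℝ) * t ^ (k - 1)
          / ((Nat.factorial k : ℝ) * (Nat.factorial (n - 2 * k) : ℝ)) * y ^ (n - 2 * k) := by
  have h1 : deriv (fun y => heatPoly n y t)
      = fun y => (Nat.factorial n : ℝ) * ∑ k ∈ range (n / 2 + 1),
        t ^ k * ((n - 2 * k : ℕ) : ℝ) * y ^ (n - 2 * k - 1)
          / ((Nat.factorial k : ℝ) * (Nat.factorial (n - 2 * k) : ℝ)) :=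
    funext fun y => (heat_hd1 n t y).deriv
  rw [h1]
  funext y
  rw [(heat_hd2 n t y).deriv, Finset.mul_sum]
  rw [Finset.sum_range_succ, Finset.sum_range_succ']
  have hlast : (Nat.factorial n : ℝ) *
      (t ^ (n / 2) * ((n - 2 * (n / 2) : ℕ) : ℝ) *
        (((n - 2 * (n / 2) - 1 : ℕ) : ℝ) * y ^ (n - 2 * (n / 2) - 1 - 1))
          / ((Nat.factorial (n / 2) : ℝ) * (Nat.factorial (n - 2 * (n / 2)) : ℝ))) = 0 := by
    have h0 : n - 2 * (n / 2) = 0 ∨ n - 2 * (n / 2) = 1 := by omega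
    rcases h0 with h | h <;> simp [h]
  have hfirst : (Nat.factorial n : ℝ) * ((0 : ℕ) : ℝ) * t ^ (0 - 1)
      / ((Nat.factorial 0 : ℝ) * (Nat.factorial (n - 2 * 0) : ℝ)) * y ^ (n - 2 * 0) = 0 := by
    simp
  rw [hlast, hfirst, add_zero, add_zero]
  refine Finset.sum_congr rfl fun k hk => ?_
  have hk' : k < n / 2 := Finset.mem_range.mp hk
  obtain ⟨m, hm⟩ : ∃ m, n - 2 * k = m + 2 := ⟨n - 2 * k - 2, by omega⟩
  have e3 : n - 2 * (k + 1) = m := by omega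
  have e4 : k + 1 - 1 = k := by omega
  rw [hm, e3, e4]
  simp only [show m + 2 - 1 - 1 = m from by omega, show m + 2 - 1 = m + 1 from by omega]
  have hk0 : (Nat.factorial k : ℝ) ≠ 0 := Nat.cast_ne_zero.mpr (Nat.factorial_ne_zero k)
  have hm0 : (Nat.factorial m : ℝ) ≠ 0 := Nat.cast_ne_zero.mpr (Nat.factorial_ne_zero m)
  rw [Nat.factorial_succ (m + 1), Nat.factorial_succ m, Nat.factorial_succ k]
  push_cast
  field_simp
  ring

theorem transmuted_heatPoly (b : ℝ) (hb : 0 < b) (q : ℝ → ℝ)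
    (T : (ℝ → ℝ) →ₗ[ℝ] (ℝ → ℝ))
    (hT : ∀ v : ℝ → ℝ, ContDiff ℝ 2 v → ∀ x ∈ Set.Icc (-b) b,
      deriv (deriv (T v)) x - q x * T v x = T (deriv (deriv v)) x) :
    ∀ n : ℕ, ∀ x ∈ Set.Icc (-b) b, ∀ t : ℝ,
      (T (fun y => heatPoly n y t) x
        = (Nat.factorial n : ℝ) * ∑ k ∈ Finset.range (n / 2 + 1),
            t ^ k * T (fun y => y ^ (n - 2 * k)) x
              / ((Nat.factorial k : ℝ) * (Nat.factorial (n - 2 * k) : ℝ))) ∧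
      deriv (deriv (fun y => T (fun z => heatPoly n z t) y)) x
          - q x * T (fun z => heatPoly n z t) x
        = deriv (fun s => T (fun z => heatPoly n z s) x) t := by
  intro n x hx t
  have key : ∀ s : ℝ, T (fun y => heatPoly n y s) x
      = (Nat.factorial n : ℝ) * ∑ k ∈ range (n / 2 + 1),
          s ^ k * T (fun y => y ^ (n - 2 * k)) x
            / ((Nat.factorial k : ℝ) * (Nat.factorial (n - 2 * k) : ℝ)) := by
    intro s
    have hfun : (fun y => heatPoly n y s)
        = fun y => ∑ k ∈ range (n / 2 + 1),
            ((Nat.factorial n : ℝ) * s ^ k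
              / ((Nat.factorial k : ℝ) * (Nat.factorial (n - 2 * k) : ℝ))) * y ^ (n - 2 * k) := by
      funext y
      unfold heatPoly
      rw [Finset.mul_sum]
      exact Finset.sum_congr rfl fun k _ => by ring
    rw [hfun,
      T_sum_mono T (range (n / 2 + 1))
        (fun k => (Nat.factorial n : ℝ) * s ^ k
          / ((Nat.factorial k : ℝ) * (Nat.factorial (n - 2 * k) : ℝ)))
        (fun k => n - 2 * k) x,
      Finset.mul_sum]
    exact Finset.sum_congr rfl fun k _ => by ring
  refine ⟨key t, ?_⟩
  have hv : ContDiff ℝ 2 (fun y => heatPoly n y t) := by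
    unfold heatPoly
    exact contDiff_const.mul (ContDiff.sum fun k _ =>
      ((contDiff_const.mul (contDiff_id.pow _)).div_const _))
  have hL := hT _ hv x hx
  have lhs_eq : deriv (deriv (fun y => T (fun z => heatPoly n z t) y)) x
      - q x * T (fun z => heatPoly n z t) x
      = T (deriv (deriv (fun z => heatPoly n z t))) x := hL
  rw [lhs_eq, heat_dd n t,
    T_sum_mono T (range (n / 2 + 1))
      (fun k => (Nat.factorial n : ℝ) * (k : ℝ) * t ^ (k - 1)
        / ((Nat.factorial k : ℝ) * (Nat.factorial (n - 2 * k) : ℝ)))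
      (fun k => n - 2 * k) x]
  have hfun2 : (fun s => T (fun z => heatPoly n z s) x)
      = fun s => (Nat.factorial n : ℝ) * ∑ k ∈ range (n / 2 + 1),
          s ^ k * T (fun y => y ^ (n - 2 * k)) x
            / ((Nat.factorial k : ℝ) * (Nat.factorial (n - 2 * k) : ℝ)) := funext key
  rw [hfun2]
  have hder : HasDerivAt (fun s => (Nat.factorial n : ℝ) * ∑ k ∈ range (n / 2 + 1),
      s ^ k * T (fun y => y ^ (n - 2 * k)) x
        / ((Nat.factorial k : ℝ) * (Nat.factorial (n - 2 * k) : ℝ)))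
      ((Nat.factorial n : ℝ) * ∑ k ∈ range (n / 2 + 1),
        (k : ℝ) * t ^ (k - 1) * T (fun y => y ^ (n - 2 * k)) x
          / ((Nat.factorial k : ℝ) * (Nat.factorial (n - 2 * k) : ℝ))) t := by
    refine HasDerivAt.const_mul _ (HasDerivAt.fun_sum fun k _ => ?_)
    have h := ((hasDerivAt_pow k t).mul_const (T (fun y => y ^ (n - 2 * k)) x)).div_const
      ((Nat.factorial k : ℝ) * (Nat.factorial (n - 2 * k) : ℝ))
    convert h using 1
  rw [hder.deriv, Finset.mul_sum]
  exact Finset.sum_congr rfl fun k _ => by ring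
end
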